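/- Let $0<\nu<1$, $a\in\mathbb{Z}$, $p:\mathbb{N}_a\to(0,\infty)$, $q:\mathbb{N}_{a+1}\to\mathbb{R}$, $f:\mathbb{N}_{a+1}\to\mathbb{R}$, and $M\ge 0$. A function $y:\mathbb{N}_{a-1}\to\mathbb{R}$ with $\lim_{t\to\infty}y(t)=M$ and $\nabla y(a)=0$ solves $\nabla_{a-1}^{\nu}(p\nabla y)(t)+q(t)y(t-1)=f(t)$ for all $t\in\mathbb{N}_{a+1}$ if and only if $y(t)=M+\sum_{s=t+1}^{\infty}\frac{1}{p(s)}\sum_{\tau=a+1}^{s}\frac{(s-\tau+1)^{\overline{\nu-1}}}{\Gamma(\nu)}\big(q(\tau)y(\tau-1)-f(\tau)\big)$ for all $t\in\mathbb{N}_{a-1}$ (with the relevant series converging). -/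

import Mathlib

open Filter Finset

/-- Generalized rising function `x^{\overline r} = Γ(x+r)/Γ(x)` (with the usual
vanishing convention, since `Real.Gamma` vanishes at nonpositive integers and
division by zero is zero in Lean). -/
noncomputable def rfac (x r : ℝ) : ℝ := Real.Gamma (x + r) / Real.Gamma x

/-- Backward (nabla) difference. -/
def nbl (f : ℤ → ℝ) (t : ℤ) : ℝ := f t - f (t - 1)

/-- The `ν`-th order nabla fractional sum based at `a`. -/
noncomputable def nsum (ν : ℝ) (a : ℤ) (f : ℤ → ℝ) (t : ℤ) : ℝ :=
  (1 / Real.Gamma ν) * ∑ s ∈ Finset.Icc (a + 1) t, rfac ((t : ℝ) - (s : ℝ) + 1) (ν - 1) * f s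

/-- The `ν`-th order nabla fractional difference based at `a`, for `0 < ν < 1`. -/
noncomputable def ndiff (ν : ℝ) (a : ℤ) (f : ℤ → ℝ) (t : ℤ) : ℝ :=
  nbl (nsum (1 - ν) a f) t

/-! The kernel of `nsum μ` is `(n + 1)^{\overline{μ - 1}} / Γ(μ) = multichoose μ n`, so the
Chu–Vandermonde identity for `multichoose` gives the semigroup law
`∇^{-μ} ∇^{-ν} = ∇^{-(μ + ν)}`, and `∇^{-1}` is the plain partial sum. Put
`g τ = q τ * y (τ - 1) - f τ`. Since `∇y(a) = 0`, the equation says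
`∇_{a-1}^{-(1-ν)} (p ∇y) = -∇_a^{-1} g = ∇_{a-1}^{-(1-ν)} (-∇_a^{-ν} g)` on `ℕ_a`. A fractional sum
is a unitriangular operator, hence injective, so this is `p ∇y = -∇_a^{-ν} g` on `ℕ_a`, and
telescoping from `y(∞) = M` turns that into the series representation. -/

theorem Ring.add_multichoose_eq {R : Type*} [CommRing R] [BinomialRing R] (r s : R) (k : ℕ) :
    Ring.multichoose (r + s) k =
      ∑ ij ∈ antidiagonal k, Ring.multichoose r ij.1 * Ring.multichoose s ij.2 := by
  have h := Ring.add_choose_eq (r := -r) (s := -s) k (Commute.all _ _)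
  rw [← neg_add, Ring.choose_neg'] at h
  simp_rw [Ring.choose_neg'] at h
  rw [← smul_left_cancel_iff ((k : ℤ).negOnePow), h, Finset.smul_sum]
  refine Finset.sum_congr rfl fun ij hij => ?_
  rw [← mem_antidiagonal.mp hij, Nat.cast_add, Int.negOnePow_add, smul_mul_smul_comm]

theorem Real.Gamma_add_nat_eq_ascPochhammer_mul {μ : ℝ} (hμ : 0 < μ) (n : ℕ) :
    Real.Gamma (μ + n) = (ascPochhammer ℝ n).eval μ * Real.Gamma μ := by
  induction n with
  | zero => simp
  | succ n ih =>
    rw [Nat.cast_succ, ← add_assoc, Real.Gamma_add_one (by positivity), ih,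
      ascPochhammer_succ_eval]
    ring

theorem Real.multichoose_eq_Gamma {μ : ℝ} (hμ : 0 < μ) (n : ℕ) :
    Ring.multichoose μ n = Real.Gamma (μ + n) / (n.factorial * Real.Gamma μ) := by
  have h := Ring.factorial_nsmul_multichoose_eq_ascPochhammer μ n
  rw [Polynomial.ascPochhammer_smeval_eq_eval, nsmul_eq_mul] at h
  rw [Real.Gamma_add_nat_eq_ascPochhammer_mul hμ, ← h]
  have := (Real.Gamma_pos_of_pos hμ).ne'
  field_simp

theorem rfac_div_Gamma_eq_multichoose {μ : ℝ} (hμ : 0 < μ) (n : ℕ) :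
    rfac ((n : ℝ) + 1) (μ - 1) / Real.Gamma μ = Ring.multichoose μ n := by
  rw [Real.multichoose_eq_Gamma hμ, rfac, Real.Gamma_nat_eq_factorial, div_div]
  ring_nf

theorem sum_Icc_eq_sum_antidiagonal {M : Type*} [AddCommMonoid M] {τ t : ℤ} (h : τ ≤ t)
    (F : ℕ → ℕ → M) :
    ∑ s ∈ Icc τ t, F (s - τ).toNat (t - s).toNat =
      ∑ ij ∈ antidiagonal (t - τ).toNat, F ij.1 ij.2 := by
  refine Finset.sum_nbij' (fun s => ((s - τ).toNat, (t - s).toNat)) (fun ij => τ + ij.1)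
    ?_ ?_ ?_ ?_ (fun _ _ => rfl)
  all_goals
    intro x hx
    simp only [mem_Icc, HasAntidiagonal.mem_antidiagonal, Prod.ext_iff] at hx ⊢
    omega

section nsum

variable {μ ν : ℝ} {a : ℤ}

theorem nsum_eq_sum_multichoose (hμ : 0 < μ) (g : ℤ → ℝ) (t : ℤ) :
    nsum μ a g t = ∑ s ∈ Icc (a + 1) t, Ring.multichoose μ (t - s).toNat * g s := by
  rw [nsum, mul_sum]
  refine sum_congr rfl fun s hs => ?_
  have hst : ((t : ℝ) - s + 1) = ((t - s).toNat : ℝ) + 1 := by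
    rw [← Int.cast_natCast, Int.toNat_of_nonneg (by linarith [(mem_Icc.mp hs).2])]
    push_cast
    ring
  rw [hst, ← rfac_div_Gamma_eq_multichoose hμ]
  ring

theorem sum_rfac_div_Gamma_mul_eq_nsum (g : ℤ → ℝ) (t : ℤ) :
    ∑ s ∈ Icc (a + 1) t, rfac ((t : ℝ) - s + 1) (μ - 1) / Real.Gamma μ * g s = nsum μ a g t := by
  rw [nsum, mul_sum]
  exact sum_congr rfl fun s _ => by ring

theorem nsum_one (g : ℤ → ℝ) (t : ℤ) : nsum 1 a g t = ∑ s ∈ Icc (a + 1) t, g s := by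
  simp [nsum_eq_sum_multichoose one_pos]

theorem nsum_nsum (hμ : 0 < μ) (hν : 0 < ν) (g : ℤ → ℝ) (t : ℤ) :
    nsum μ a (nsum ν a g) t = nsum (μ + ν) a g t := by
  simp_rw [nsum_eq_sum_multichoose hμ, nsum_eq_sum_multichoose hν,
    nsum_eq_sum_multichoose (add_pos hμ hν), mul_sum]
  rw [sum_comm' (t' := Icc (a + 1) t) (s' := fun τ => Icc τ t)
    (fun s τ => by simp only [mem_Icc]; omega)]
  refine sum_congr rfl fun τ hτ => ?_
  simp_rw [← mul_assoc, ← sum_mul]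
  rw [add_comm μ, Ring.add_multichoose_eq, ← sum_Icc_eq_sum_antidiagonal (mem_Icc.mp hτ).2
    fun i j => Ring.multichoose ν i * Ring.multichoose μ j]
  simp_rw [mul_comm (Ring.multichoose μ _)]

theorem nsum_neg (g : ℤ → ℝ) (t : ℤ) : nsum μ a (fun s => -g s) t = -nsum μ a g t := by
  simp [nsum]

theorem nsum_congr {u v : ℤ → ℝ} {t : ℤ} (h : ∀ s, a < s → s ≤ t → u s = v s) :
    nsum μ a u t = nsum μ a v t := by
  unfold nsum
  congr 1
  refine sum_congr rfl fun s hs => ?_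
  rw [h s (by linarith [(mem_Icc.mp hs).1]) (mem_Icc.mp hs).2]

theorem nsum_sub_one_of_eq_zero {g : ℤ → ℝ} (hg : g a = 0) (t : ℤ) :
    nsum μ (a - 1) g t = nsum μ a g t := by
  unfold nsum
  rw [sub_add_cancel]
  congr 1
  refine (sum_subset (Icc_subset_Icc_left (by omega)) fun s hs hs' => ?_).symm
  obtain rfl : s = a := by simp only [mem_Icc] at hs hs'; omega
  rw [hg, mul_zero]

theorem nsum_sub_one_self (hμ : 0 < μ) (g : ℤ → ℝ) : nsum μ (a - 1) g a = g a := by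
  rw [nsum_eq_sum_multichoose hμ, sub_add_cancel, Icc_self, sum_singleton, sub_self,
    Int.toNat_zero, Ring.multichoose_zero_right, one_mul]

theorem eq_of_nsum_eq (hμ : 0 < μ) {u v : ℤ → ℝ}
    (h : ∀ t, a < t → nsum μ a u t = nsum μ a v t) : ∀ t, a < t → u t = v t := by
  suffices ∀ t, a ≤ t → ∀ s ∈ Icc (a + 1) t, u s = v s from
    fun t ht => this t ht.le t (mem_Icc.mpr ⟨ht, le_rfl⟩)
  intro t ht
  induction t, ht using Int.leInduction with
  | base => simp
  | succ t ht ih =>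
    have hlast := h (t + 1) (by omega)
    simp_rw [nsum_eq_sum_multichoose hμ] at hlast
    rw [← insert_Icc_right_eq_Icc_add_one (by omega), sum_insert (by simp),
      sum_insert (by simp), sum_congr rfl fun s hs => by rw [ih s hs], sub_self,
      Int.toNat_zero, Ring.multichoose_zero_right, one_mul, one_mul] at hlast
    rw [← insert_Icc_right_eq_Icc_add_one (by omega)]
    intro s hs
    rcases mem_insert.mp hs with rfl | hs
    · linarith
    · exact ih s hs

end nsum

theorem nbl_sum_Icc (g : ℤ → ℝ) {b t : ℤ} (h : b ≤ t) :
    nbl (fun u => ∑ s ∈ Icc b u, g s) t = g t := by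
  obtain ⟨u, rfl⟩ : ∃ u, t = u + 1 := ⟨t - 1, by ring⟩
  rw [nbl, add_sub_cancel_right, ← insert_Icc_right_eq_Icc_add_one h, sum_insert (by simp)]
  ring

theorem forall_eq_iff_forall_nbl_eq {F G : ℤ → ℝ} {b : ℤ} (h0 : F b = G b) :
    (∀ t, b < t → nbl F t = nbl G t) ↔ ∀ t, b ≤ t → F t = G t := by
  refine ⟨fun h t ht => ?_, fun h t ht => by rw [nbl, nbl, h t ht.le, h (t - 1) (by omega)]⟩
  induction t, ht using Int.leInduction with
  | base => exact h0
  | succ t ht ih =>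
    have := h (t + 1) (by omega)
    rw [nbl, nbl, add_sub_cancel_right, ih] at this
    linarith

theorem forall_eq_add_tsum_iff_forall_nbl_eq_neg {y D : ℤ → ℝ} {M : ℝ} {b : ℤ}
    (hy : Tendsto y atTop (nhds M)) (hD : ∀ t, b ≤ t → Summable fun k : ℕ => D (t + 1 + k)) :
    (∀ t, b ≤ t → y t = M + ∑' k : ℕ, D (t + 1 + k)) ↔ ∀ t, b < t → nbl y t = -D t := by
  constructor
  · intro h t ht
    have hshift := (hD (t - 1) (by omega)).tsum_eq_zero_add
    simp only [Nat.cast_zero, add_zero, sub_add_cancel, Nat.cast_succ, ← add_assoc,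
      add_right_comm t _ (1 : ℤ)] at hshift
    rw [nbl, h t ht.le, h (t - 1) (by omega), sub_add_cancel, hshift]
    ring
  · intro h t ht
    have htelescope : ∀ n : ℕ, ∑ k ∈ range n, D (t + 1 + k) = y t - y (t + n) := by
      intro n
      induction n with
      | zero => simp
      | succ n ih =>
        have := h (t + n + 1) (by omega)
        rw [nbl, add_sub_cancel_right] at this
        rw [sum_range_succ, ih, Nat.cast_succ, ← add_assoc, add_right_comm t 1]
        linarith
    have hlim : Tendsto (fun n : ℕ => ∑ k ∈ range n, D (t + 1 + k)) atTop (nhds (y t - M)) := by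
      simp_rw [htelescope]
      exact tendsto_const_nhds.sub
        (hy.comp (tendsto_atTop_add_const_left _ t tendsto_natCast_atTop_atTop))
    rw [tendsto_nhds_unique (hD t ht).hasSum.tendsto_sum_nat hlim]
    ring

theorem stmt15_general (ν : ℝ) (h1 : 0 < ν) (h2 : ν < 1) (a : ℤ) (p q f : ℤ → ℝ) (M : ℝ)
    (hp : ∀ t, a ≤ t → 0 < p t)
    (y : ℤ → ℝ)
    (hlim : Filter.Tendsto y Filter.atTop (nhds M))
    (hnab : nbl y a = 0)
    (hconv : ∀ t : ℤ, a - 1 ≤ t → Summable (fun k : ℕ =>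
      (1 / p (t + 1 + k)) * ∑ τ ∈ Finset.Icc (a + 1) (t + 1 + (k : ℤ)),
        rfac ((t : ℝ) + 1 + (k : ℝ) - (τ : ℝ) + 1) (ν - 1) / Real.Gamma ν *
          (q τ * y (τ - 1) - f τ))) :
    (∀ t, a + 1 ≤ t →
      ndiff ν (a - 1) (fun s => p s * nbl y s) t + q t * y (t - 1) = f t) ↔
    (∀ t, a - 1 ≤ t → y t = M + ∑' k : ℕ,
      (1 / p (t + 1 + k)) * ∑ τ ∈ Finset.Icc (a + 1) (t + 1 + (k : ℤ)),
        rfac ((t : ℝ) + 1 + (k : ℝ) - (τ : ℝ) + 1) (ν - 1) / Real.Gamma ν *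
          (q τ * y (τ - 1) - f τ)) := by
  have hterm (t : ℤ) (k : ℕ) : (1 / p (t + 1 + k)) * ∑ τ ∈ Icc (a + 1) (t + 1 + (k : ℤ)),
      rfac ((t : ℝ) + 1 + (k : ℝ) - (τ : ℝ) + 1) (ν - 1) / Real.Gamma ν * (q τ * y (τ - 1) - f τ) =
        nsum ν a (fun τ => q τ * y (τ - 1) - f τ) (t + 1 + k) / p (t + 1 + k) := by
    rw [← sum_rfac_div_Gamma_mul_eq_nsum, one_div_mul_eq_div]
    push_cast
    rfl
  simp_rw [hterm] at hconv ⊢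
  set g : ℤ → ℝ := fun τ => q τ * y (τ - 1) - f τ
  have h1ν : 0 < 1 - ν := by linarith
  have hsolution (t : ℤ) : nsum (1 - ν) (a - 1) (fun s => -nsum ν a g s) t =
      -∑ τ ∈ Icc (a + 1) t, g τ := by
    rw [nsum_neg, nsum_sub_one_of_eq_zero (by simp [nsum]), nsum_nsum h1ν h1, sub_add_cancel,
      nsum_one]
  calc _ ↔ ∀ t, a ≤ t → nsum (1 - ν) (a - 1) (fun s => p s * nbl y s) t =
        nsum (1 - ν) (a - 1) (fun s => -nsum ν a g s) t := by
        simp_rw [hsolution]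
        refine Iff.trans (forall₂_congr fun t ht => ?_)
          (forall_eq_iff_forall_nbl_eq (by simp [nsum_sub_one_self h1ν, hnab]))
        rw [ndiff, show nbl (fun u => -∑ τ ∈ Icc (a + 1) u, g τ) t = -g t by
          rw [← nbl_sum_Icc g ht]; simp only [nbl]; ring]
        constructor <;> intro h <;> linarith
    _ ↔ ∀ s, a - 1 < s → p s * nbl y s = -nsum ν a g s :=
        ⟨fun h => eq_of_nsum_eq h1ν fun t ht => h t (by omega),
          fun h t _ => nsum_congr fun s hs _ => h s hs⟩
    _ ↔ ∀ s, a - 1 < s → nbl y s = -(nsum ν a g s / p s) := by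
        refine forall₂_congr fun s hs => ?_
        rw [← neg_div, eq_div_iff (hp s (by omega)).ne', mul_comm]
    _ ↔ _ :=
        (forall_eq_add_tsum_iff_forall_nbl_eq_neg (D := fun u => nsum ν a g u / p u) hlim
          hconv).symm

theorem stmt15 (ν : ℝ) (h1 : 0 < ν) (h2 : ν < 1) (a : ℤ) (p q f : ℤ → ℝ) (M : ℝ)
    (hM : 0 ≤ M) (hp : ∀ t, a ≤ t → 0 < p t)
    (y : ℤ → ℝ)
    (hlim : Filter.Tendsto y Filter.atTop (nhds M))
    (hnab : nbl y a = 0)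
    (hconv : ∀ t : ℤ, a - 1 ≤ t → Summable (fun k : ℕ =>
      (1 / p (t + 1 + k)) * ∑ τ ∈ Finset.Icc (a + 1) (t + 1 + (k : ℤ)),
        rfac ((t : ℝ) + 1 + (k : ℝ) - (τ : ℝ) + 1) (ν - 1) / Real.Gamma ν *
          (q τ * y (τ - 1) - f τ))) :
    (∀ t, a + 1 ≤ t →
      ndiff ν (a - 1) (fun s => p s * nbl y s) t + q t * y (t - 1) = f t) ↔
    (∀ t, a - 1 ≤ t → y t = M + ∑' k : ℕ,
      (1 / p (t + 1 + k)) * ∑ τ ∈ Finset.Icc (a + 1) (t + 1 + (k : ℤ)),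
        rfac ((t : ℝ) + 1 + (k : ℝ) - (τ : ℝ) + 1) (ν - 1) / Real.Gamma ν *
          (q τ * y (τ - 1) - f τ)) :=
  stmt15_general ν h1 h2 a p q f M hp y hlim hnab hconv
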